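/- arXiv:0705.2492 — 2 statements merged into one kernel-verified Lean document; each statement's English description precedes it below -/
import Mathlib

section
/- Let A be a unique factorization domain containing ℚ and let X be a nonzero locally nilpotent derivation of A. Then for every local slice s of X there exists a minimal local slice s₀ of X such that X(s₀) divides X(s) in A. -/
/-- `s` is a local slice of the derivation `X`: `X s ≠ 0` and `X² s = 0`. -/
def IsLocalSlice {A : Type*} [CommRing A] (X : Derivation ℤ A A) (s : A) : Prop :=
  X s ≠ 0 ∧ X (X s) = 0

/-- A local slice `s` is minimal if every local slice `v` with `X v ∣ X s`
satisfies `X v = μ • X s` for a unit `μ`. -/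
def IsMinimalLocalSlice {A : Type*} [CommRing A] (X : Derivation ℤ A A) (s : A) : Prop :=
  IsLocalSlice X s ∧ ∀ v : A, IsLocalSlice X v → X v ∣ X s →
    ∃ μ : Aˣ, X v = (μ : A) * X s

/-! Divisibility is well founded in a UFD, so among the values `X v` of local slices dividing
`X s` there is one with no proper divisor of the same kind. -/

theorem WfDvdMonoid.exists_dvd_forall_dvd_associated {α : Type*}
    [CommMonoidWithZero α] [IsCancelMulZero α] [WfDvdMonoid α] {P : α → Prop} {a : α} (ha : P a) :
    ∃ b, P b ∧ b ∣ a ∧ ∀ c, P c → c ∣ b → Associated b c := by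
  obtain ⟨b, ⟨hPb, hba⟩, hmin⟩ :=
    wellFounded_dvdNotUnit.has_min {b | P b ∧ b ∣ a} ⟨a, ha, dvd_rfl⟩
  refine ⟨b, hPb, hba, fun c hPc hcb => associated_of_dvd_dvd ?_ hcb⟩
  by_contra hbc
  exact hmin c ⟨hPc, hcb.trans hba⟩ (dvd_and_not_dvd_iff.mp ⟨hcb, hbc⟩)

theorem minimal_local_slice_exists_general
    {A : Type*} [CommRing A] [IsDomain A] [UniqueFactorizationMonoid A]
    (X : Derivation ℤ A A)
    (s : A) (hs : IsLocalSlice X s) :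
    ∃ s₀ : A, IsMinimalLocalSlice X s₀ ∧ X s₀ ∣ X s := by
  obtain ⟨_, ⟨s₀, hs₀, rfl⟩, hdvd, hmin⟩ :=
    WfDvdMonoid.exists_dvd_forall_dvd_associated (P := fun a => ∃ v, IsLocalSlice X v ∧ X v = a)
      ⟨s, hs, rfl⟩
  refine ⟨s₀, ⟨hs₀, fun v hv hvs => ?_⟩, hdvd⟩
  obtain ⟨μ, hμ⟩ := hmin (X v) ⟨v, hv, rfl⟩ hvs
  exact ⟨μ, hμ.symm.trans (mul_comm _ _)⟩

/-- For a nonzero locally nilpotent derivation of a UFD containing `ℚ`, every local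
slice `s` admits a minimal local slice `s₀` with `X s₀ ∣ X s`. -/
theorem minimal_local_slice_exists
    {A : Type*} [CommRing A] [IsDomain A] [UniqueFactorizationMonoid A] [Algebra ℚ A]
    (X : Derivation ℤ A A) (hX : X ≠ 0)
    (hln : ∀ a : A, ∃ n : ℕ, 0 < n ∧ (⇑X)^[n] a = 0)
    (s : A) (hs : IsLocalSlice X s) :
    ∃ s₀ : A, IsMinimalLocalSlice X s₀ ∧ X s₀ ∣ X s :=
  minimal_local_slice_exists_general X s hs
end

section
/- Let A be a unique factorization domain containing ℚ and let X be a nonzero locally nilpotent derivation of A whose plinth ideal S^X is a principal ideal of the ring of constants A^X. Then for every minimal local slice s of X, the plinth ideal S^X is generated by X(s). -/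
/-- The plinth set `S^X = {X a : X² a = 0}` (an ideal of the ring of constants `A^X`). -/
def plinthSet {A : Type*} [CommRing A] (X : Derivation ℤ A A) : Set A :=
  {d : A | ∃ a : A, X a = d ∧ X (X a) = 0}

/-- If the plinth ideal of a nonzero locally nilpotent derivation of a UFD containing `ℚ`
is a principal ideal of `A^X`, then it is generated by `X s` for any minimal local slice `s`. -/
theorem plinth_generated_by_minimal_local_slice
    {A : Type*} [CommRing A] [IsDomain A] [UniqueFactorizationMonoid A] [Algebra ℚ A]
    (X : Derivation ℤ A A) (hX : X ≠ 0)
    (hln : ∀ a : A, ∃ n : ℕ, 0 < n ∧ (⇑X)^[n] a = 0)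
    (hprin : ∃ c : A, X c = 0 ∧
      plinthSet X = {d : A | ∃ r : A, X r = 0 ∧ d = r * c})
    (s : A) (hs : IsMinimalLocalSlice X s) :
    plinthSet X = {d : A | ∃ r : A, X r = 0 ∧ d = r * X s} := by
  obtain ⟨c, hc0, hcset⟩ := hprin
  obtain ⟨hsls, hmin⟩ := hs
  obtain ⟨hXs, hXXs⟩ := hsls
  -- X s ∈ plinthSet
  have hXsP : X s ∈ plinthSet X := ⟨s, rfl, hXXs⟩
  rw [hcset] at hXsP
  obtain ⟨r₀, hr₀, hsr₀⟩ := hXsP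
  have hcne : c ≠ 0 := by
    intro h
    apply hXs
    rw [hsr₀, h, mul_zero]
  -- c ∈ plinthSet
  have hcP : c ∈ plinthSet X := by
    rw [hcset]
    exact ⟨1, by simp, by simp⟩
  obtain ⟨a, ha, haa⟩ := hcP
  have hane : X a ≠ 0 := by rw [ha]; exact hcne
  obtain ⟨μ, hμ⟩ := hmin a ⟨hane, haa⟩ (ha ▸ hsr₀ ▸ Dvd.intro r₀ (mul_comm c r₀ ▸ rfl))
  have hcμ : c = (μ : A) * X s := by rw [← ha, hμ]
  have hXμ : X (μ : A) = 0 := by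
    have h0 : X (μ : A) * X s = 0 := by
      have := hc0
      rw [hcμ] at this
      rw [Derivation.leibniz, smul_eq_mul, smul_eq_mul, hXXs, mul_zero, zero_add,
        mul_comm] at this
      exact this
    rcases mul_eq_zero.mp h0 with h | h
    · exact h
    · exact absurd h hXs
  ext d
  rw [hcset]
  constructor
  · rintro ⟨r, hr, rfl⟩
    refine ⟨r * (μ : A), ?_, by rw [hcμ, mul_assoc]⟩
    rw [Derivation.leibniz, smul_eq_mul, smul_eq_mul, hr, hXμ, mul_zero, mul_zero, add_zero]
  · rintro ⟨r, hr, rfl⟩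
    have hrs : X (r * s) = r * X s := by
      rw [Derivation.leibniz, smul_eq_mul, smul_eq_mul, hr, mul_zero, add_zero]
    have hd : r * X s ∈ plinthSet X := by
      refine ⟨r * s, hrs, ?_⟩
      rw [hrs, Derivation.leibniz, smul_eq_mul, smul_eq_mul, hr, hXXs, mul_zero, mul_zero,
        add_zero]
    rw [hcset] at hd
    exact hd
end
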